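/- The support-leaf property of least resolved trees of 2-BMGs does not extend to ℓ-BMGs with ℓ ≥ 3: the leaf-colored tree (T,σ) = ((a,b),(c,a')) — whose root has two inner-vertex children, one with leaf children a, b and the other with leaf children c, a' — with three distinct leaf colors satisfying σ(a)=σ(a') and σ(a), σ(b), σ(c) pairwise distinct, is a least resolved tree whose best match graph is a connected 3-BMG, yet its root has no child that is a leaf (i.e., child_T(ρ) ∩ L(T) = ∅). -/
import Mathlib


/-- A (finite) rooted tree on vertex type `V`, encoded by its ancestor relation:
`anc u v` means that `u` is an ancestor of `v`, i.e. `u` lies on the path from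
the root to `v` (in particular the relation is reflexive, `v ⪯_T u ↔ anc u v`). -/
structure RTree (V : Type) where
  anc : V → V → Prop
  refl : ∀ v, anc v v
  antisymm : ∀ u v, anc u v → anc v u → u = v
  trans : ∀ u v w, anc u v → anc v w → anc u w
  root : V
  root_anc : ∀ v, anc root v
  chain : ∀ u v w, anc u w → anc v w → anc u v ∨ anc v u

namespace RTree

variable {V C : Type}

/-- a leaf: a vertex without proper descendants. -/
def IsLeaf (T : RTree V) (v : V) : Prop := ∀ w, T.anc v w → w = v

/-- `v` is a child of `u`: `v ≺_T u` with no vertex strictly in between. -/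
def IsChild (T : RTree V) (v u : V) : Prop :=
  T.anc u v ∧ u ≠ v ∧ ∀ w, T.anc u w → T.anc w v → w = u ∨ w = v

/-- phylogenetic: every inner vertex has at least two children. -/
def Phylo (T : RTree V) : Prop :=
  ∀ u, ¬ T.IsLeaf u → ∃ v w, v ≠ w ∧ T.IsChild v u ∧ T.IsChild w u

/-- the leaf set `L(T)`. -/
def leaves (T : RTree V) : Set V := {x | T.IsLeaf x}

/-- `y` is a best match of `x` in the leaf-colored tree `(T,σ)`:
both are leaves, `σ x ≠ σ y`, and for every leaf `y'` of the color `σ y` we have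
`lca(x,y) ⪯_T lca(x,y')`, i.e. every common ancestor of `x` and `y'` is an
ancestor of `y`.  These are exactly the arcs of the best match graph `G(T,σ)`,
whose vertex set is the leaf set of `T`. -/
def BestMatch (T : RTree V) (σ : V → C) (x y : V) : Prop :=
  T.IsLeaf x ∧ T.IsLeaf y ∧ σ x ≠ σ y ∧
    ∀ y', T.IsLeaf y' → σ y' = σ y →
      ∀ u, T.anc u x → T.anc u y' → T.anc u y

/-- the subtree `T(v)` of `T` rooted at `v`. -/
def subtree (T : RTree V) (v : V) : RTree {w : V // T.anc v w} where
  anc a b := T.anc a.1 b.1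
  refl a := T.refl a.1
  antisymm a b h1 h2 := Subtype.ext (T.antisymm _ _ h1 h2)
  trans a b c h1 h2 := T.trans _ _ _ h1 h2
  root := ⟨v, T.refl v⟩
  root_anc a := a.2
  chain a b c h1 h2 := T.chain _ _ _ h1 h2

/-- contraction of the tree edge between the non-root vertex `v` and its
parent: the vertex `v` is identified with its parent, i.e. deleted. -/
def contract (T : RTree V) (v : V) (hv : v ≠ T.root) : RTree {w : V // w ≠ v} where
  anc a b := T.anc a.1 b.1
  refl a := T.refl a.1
  antisymm a b h1 h2 := Subtype.ext (T.antisymm _ _ h1 h2)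
  trans a b c h1 h2 := T.trans _ _ _ h1 h2
  root := ⟨T.root, Ne.symm hv⟩
  root_anc a := T.root_anc a.1
  chain a b c h1 h2 := T.chain _ _ _ h1 h2

/-- The edge of `T` between `v` and its parent is redundant with respect to
`G(T,σ)`: contracting it yields a tree that still explains `G(T,σ)`, i.e. the
contracted tree has the same leaf set and induces the same best-match arcs.
(Edges of a rooted tree are identified with their lower endpoint `v`.) -/
def Redundant (T : RTree V) (σ : V → C) (v : V) : Prop :=
  ∃ hv : v ≠ T.root,
    ¬ T.IsLeaf v ∧
    (∀ w : {w : V // w ≠ v}, T.IsLeaf w.1 ↔ (T.contract v hv).IsLeaf w) ∧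
    (∀ x y : {w : V // w ≠ v},
      (T.BestMatch σ x.1 y.1 ↔ (T.contract v hv).BestMatch (fun w => σ w.1) x y))

/-- `(T,σ)` is the least resolved tree (of the BMG `G(T,σ)`): a phylogenetic
tree none of whose edges is redundant. -/
def LeastResolved (T : RTree V) (σ : V → C) : Prop :=
  T.Phylo ∧ ∀ v, ¬ T.Redundant σ v

/-- the support leaves `S_u = child_T(u) ∩ L(T)` of a vertex `u`. -/
def SupportLeaves (T : RTree V) (u : V) : Set V :=
  {v | T.IsChild v u ∧ T.IsLeaf v}

/-- the set of colors `σ(L(T(v)))` occurring on leaves of the subtree `T(v)`. -/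
def subColors (T : RTree V) (σ : V → C) (v : V) : Set C :=
  σ '' {x | T.IsLeaf x ∧ T.anc v x}

/-- the set of colors `σ(L(T))` of the leaves of `T`. -/
def leafColors (T : RTree V) (σ : V → C) : Set C := σ '' T.leaves

/-- the leaf coloring uses exactly two colors, i.e. `G(T,σ)` is a 2-BMG. -/
def TwoColored (T : RTree V) (σ : V → C) : Prop :=
  ∃ c₁ c₂ : C, c₁ ≠ c₂ ∧ T.leafColors σ = {c₁, c₂}

end RTree

/-- the digraph with arc relation `A`, restricted to the vertex set `S`, is
connected: between any two vertices of `S` there is a path inside `S` in the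
underlying undirected graph. -/
def ConnectedOn {β : Type} (A : β → β → Prop) (S : Set β) : Prop :=
  S.Nonempty ∧ ∀ x ∈ S, ∀ y ∈ S,
    Relation.ReflTransGen (fun a b => a ∈ S ∧ b ∈ S ∧ (A a b ∨ A b a)) x y

/-- `K` is a connected component of the digraph induced by the arc relation `A`
on the vertex set `S`: a maximal connected subset of `S`. -/
def IsComponent {β : Type} (A : β → β → Prop) (S : Set β) (K : Set β) : Prop :=
  K ⊆ S ∧ ConnectedOn A K ∧
    ∀ K', K ⊆ K' → K' ⊆ S → ConnectedOn A K' → K' = K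

namespace RTree

/-- the best match graph `G(T,σ)` (on the leaf set of `T`) is connected. -/
def BMGConnected {V C : Type} (T : RTree V) (σ : V → C) : Prop :=
  ConnectedOn (T.BestMatch σ) T.leaves

/-- the umbrella vertices `U(G,σ)` of the BMG `G(T,σ)`: leaves having an
out-arc to every differently colored leaf. -/
def Umbrella {V C : Type} (T : RTree V) (σ : V → C) : Set V :=
  {x | T.IsLeaf x ∧ ∀ y, T.IsLeaf y → σ y ≠ σ x → T.BestMatch σ x y}

/-- `S` is closed under in-neighbours in `G(T,σ)`: `x ∈ S → N⁻(x) ⊆ S`. -/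
def InClosed {V C : Type} (T : RTree V) (σ : V → C) (S : Set V) : Prop :=
  ∀ x ∈ S, ∀ y, T.BestMatch σ y x → y ∈ S

/-- `S` is a support set of `G(T,σ)`: a maximal subset of the umbrella
vertices that is closed under in-neighbours. -/
def IsSupportSet {V C : Type} (T : RTree V) (σ : V → C) (S : Set V) : Prop :=
  S ⊆ T.Umbrella σ ∧ T.InClosed σ S ∧
    ∀ S', S ⊆ S' → S' ⊆ T.Umbrella σ → T.InClosed σ S' → S' = S

end RTree

/-- the ancestor relation of the tree `((a,b),(c,a'))`: vertex `0` is the root,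
`1 = lca(a,b)`, `2 = lca(c,a')`, `3 = a`, `4 = b`, `5 = c`, `6 = a'`. -/
def exAnc : Fin 7 → Fin 7 → Prop := fun a b =>
  a = 0 ∨ a = b ∨ (a = 1 ∧ (b = 3 ∨ b = 4)) ∨ (a = 2 ∧ (b = 5 ∨ b = 6))

instance : ∀ a b, Decidable (exAnc a b) := fun a b => by
  unfold exAnc; infer_instance

/-- the tree `((a,b),(c,a'))`. -/
def exTree : RTree (Fin 7) where
  anc := exAnc
  refl := by decide
  antisymm := by decide
  trans := by decide
  root := 0
  root_anc := by decide
  chain := by decide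

/-- the 3-coloring with `σ(a) = σ(a') = 0`, `σ(b) = 1`, `σ(c) = 2`. -/
def exColor : Fin 7 → Fin 3 := fun v =>
  if v = 4 then 1 else if v = 5 then 2 else 0

section Decidability

variable {V C : Type}

instance instDecAncEx : ∀ a b, Decidable (exTree.anc a b) := fun a b =>
  inferInstanceAs (Decidable (exAnc a b))

instance instDecAncContract (T : RTree V) [∀ a b, Decidable (T.anc a b)]
    (v : V) (hv : v ≠ T.root) :
    ∀ a b, Decidable ((T.contract v hv).anc a b) := fun a b =>
  inferInstanceAs (Decidable (T.anc a.1 b.1))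

instance instDecIsLeaf [Fintype V] [DecidableEq V] (T : RTree V)
    [∀ a b, Decidable (T.anc a b)] (v : V) : Decidable (T.IsLeaf v) :=
  inferInstanceAs (Decidable (∀ w, T.anc v w → w = v))

instance instDecIsChild [Fintype V] [DecidableEq V] (T : RTree V)
    [∀ a b, Decidable (T.anc a b)] (v u : V) : Decidable (T.IsChild v u) :=
  inferInstanceAs (Decidable (T.anc u v ∧ u ≠ v ∧ ∀ w, T.anc u w → T.anc w v → w = u ∨ w = v))

instance instDecBestMatch [Fintype V] [DecidableEq V] [DecidableEq C] (T : RTree V)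
    [∀ a b, Decidable (T.anc a b)] (σ : V → C) (x y : V) :
    Decidable (T.BestMatch σ x y) :=
  inferInstanceAs (Decidable (T.IsLeaf x ∧ T.IsLeaf y ∧ σ x ≠ σ y ∧
    ∀ y', T.IsLeaf y' → σ y' = σ y → ∀ u, T.anc u x → T.anc u y' → T.anc u y))

instance instDecPhylo [Fintype V] [DecidableEq V] (T : RTree V)
    [∀ a b, Decidable (T.anc a b)] : Decidable (T.Phylo) :=
  inferInstanceAs (Decidable (∀ u, ¬ T.IsLeaf u → ∃ v w, v ≠ w ∧ T.IsChild v u ∧ T.IsChild w u))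

instance instDecRedundant [Fintype V] [DecidableEq V] [DecidableEq C] (T : RTree V)
    [∀ a b, Decidable (T.anc a b)] (σ : V → C) (v : V) :
    Decidable (T.Redundant σ v) :=
  inferInstanceAs (Decidable (∃ hv : v ≠ T.root,
    ¬ T.IsLeaf v ∧
    (∀ w : {w : V // w ≠ v}, T.IsLeaf w.1 ↔ (T.contract v hv).IsLeaf w) ∧
    (∀ x y : {w : V // w ≠ v},
      (T.BestMatch σ x.1 y.1 ↔ (T.contract v hv).BestMatch (fun w => σ w.1) x y))))

end Decidability

/-- the step relation of the connectivity statement for our example. -/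
private def exStep (a b : Fin 7) : Prop :=
  a ∈ exTree.leaves ∧ b ∈ exTree.leaves ∧
    (exTree.BestMatch exColor a b ∨ exTree.BestMatch exColor b a)

private instance : ∀ a b, Decidable (exStep a b) := fun a b =>
  inferInstanceAs (Decidable (exTree.IsLeaf a ∧ exTree.IsLeaf b ∧ _))

private lemma exPath : ∀ x ∈ exTree.leaves, ∀ y ∈ exTree.leaves,
    Relation.ReflTransGen exStep x y := by
  have h34 : Relation.ReflTransGen exStep 3 4 := Relation.ReflTransGen.single (by decide)
  have h35 : Relation.ReflTransGen exStep 3 5 := Relation.ReflTransGen.single (by decide)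
  have h46 : Relation.ReflTransGen exStep 4 6 := Relation.ReflTransGen.single (by decide)
  have h43 : Relation.ReflTransGen exStep 4 3 := Relation.ReflTransGen.single (by decide)
  have h53 : Relation.ReflTransGen exStep 5 3 := Relation.ReflTransGen.single (by decide)
  have h64 : Relation.ReflTransGen exStep 6 4 := Relation.ReflTransGen.single (by decide)
  intro x hx y hy
  have key : ∀ z : Fin 7, exTree.IsLeaf z → z = 3 ∨ z = 4 ∨ z = 5 ∨ z = 6 := by decide
  have hx' := key x hx
  have hy' := key y hy
  rcases hx' with rfl | rfl | rfl | rfl <;> rcases hy' with rfl | rfl | rfl | rfl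
  · exact .refl
  · exact h34
  · exact h35
  · exact h34.trans h46
  · exact h43
  · exact .refl
  · exact h43.trans h35
  · exact h46
  · exact h53
  · exact h53.trans h34
  · exact .refl
  · exact (h53.trans h34).trans h46
  · exact h64.trans h43
  · exact h64
  · exact (h64.trans h43).trans h35
  · exact .refl

/-- The support-leaf property of LRTs of 2-BMGs does not
extend to `ℓ`-BMGs with `ℓ ≥ 3`: the tree `((a,b),(c,a'))` with three distinct
leaf colors, `σ(a) = σ(a')`, is a least resolved tree whose BMG is a connected
3-BMG (its leaf colors are exactly `{0,1,2}`), yet the root has no child that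
is a leaf. -/
theorem three_colors_no_root_support_leaf :
    exTree.LeastResolved exColor ∧
    exTree.BMGConnected exColor ∧
    exTree.leafColors exColor = {0, 1, 2} ∧
    ∀ v, exTree.IsChild v exTree.root → ¬ exTree.IsLeaf v := by
  refine ⟨⟨by decide, by decide⟩, ⟨⟨3, show exTree.IsLeaf 3 by decide⟩, exPath⟩, ?_, by decide⟩
  ext c
  simp only [RTree.leafColors, RTree.leaves, Set.mem_image, Set.mem_setOf_eq,
    Set.mem_insert_iff, Set.mem_singleton_iff]
  revert c; decide
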